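/- arXiv:2512.02493 — 4 statements merged into one kernel-verified Lean document; each statement's English description precedes it below -/
import Mathlib

section
/- Prepare-and-trace lemma: if a Hermitian operator M on A⊗B satisfies Tr[M J^E] = 1 for every completely positive trace-preserving map E : L(A) → L(B), then M = ρ ⊗ 1_B for some operator ρ on A with Tr[ρ] = 1; if in addition M ≥ 0, then ρ is a density matrix. -/
open Matrix
open scoped ComplexOrder
open scoped Kronecker

/-- Partial trace over the second tensor factor. -/
noncomputable def ptrB {n m : ℕ} (J : Matrix (Fin n × Fin m) (Fin n × Fin m) ℂ) :
    Matrix (Fin n) (Fin n) ℂ :=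
  Matrix.of fun i j => ∑ b, J (i, b) (j, b)

section helpers
variable {n m : ℕ}

lemma ptrB_add (X Y : Matrix (Fin n × Fin m) (Fin n × Fin m) ℂ) :
    ptrB (X + Y) = ptrB X + ptrB Y := by
  ext i j; simp [ptrB, Finset.sum_add_distrib]

lemma ptrB_sub (X Y : Matrix (Fin n × Fin m) (Fin n × Fin m) ℂ) :
    ptrB (X - Y) = ptrB X - ptrB Y := by
  ext i j; simp [ptrB, Finset.sum_sub_distrib]

lemma ptrB_std_ne (i j : Fin n) (a b : Fin m) (c : ℂ) (hab : a ≠ b) :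
    ptrB (Matrix.single ((i, a) : Fin n × Fin m) (j, b) c) = 0 := by
  ext i' j'
  simp only [ptrB, Matrix.of_apply, Matrix.single, Matrix.zero_apply]
  apply Finset.sum_eq_zero
  intro b' _
  rw [if_neg]
  rintro ⟨h1, h2⟩
  rw [Prod.mk.injEq] at h1 h2
  exact hab (h1.2.trans h2.2.symm)

lemma ptrB_std_eq (i j : Fin n) (a : Fin m) (c : ℂ) :
    ptrB (Matrix.single ((i, a) : Fin n × Fin m) (j, a) c) =
      Matrix.single i j c := by
  ext i' j'
  simp only [ptrB, Matrix.of_apply, Matrix.single, Prod.mk.injEq]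
  rw [Finset.sum_eq_single a]
  · simp [and_assoc, and_comm, and_left_comm]
  · intro b' _ hb'
    rw [if_neg]
    rintro ⟨⟨-, h1⟩, -⟩
    exact hb' h1.symm
  · simp

lemma std_conjTranspose (p q : Fin n × Fin m) (c : ℂ) :
    (Matrix.single p q c)ᴴ = Matrix.single q p (star c) := by
  ext r s
  simp only [Matrix.conjTranspose_apply, Matrix.single, Matrix.of_apply]
  split_ifs with h1 h2 h2 <;> first | rfl | (exfalso; tauto) | simp

lemma trace_mul_std (M : Matrix (Fin n × Fin m) (Fin n × Fin m) ℂ)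
    (p q : Fin n × Fin m) (c : ℂ) :
    (M * Matrix.single p q c).trace = c * M q p := by
  classical
  simp [Matrix.trace, Matrix.diag, Matrix.mul_apply, Matrix.single, Matrix.of_apply,
    ite_and, mul_comm]

end helpers
lemma key {n m : ℕ} [NeZero m]
    (M : Matrix (Fin n × Fin m) (Fin n × Fin m) ℂ)
    (h : ∀ J : Matrix (Fin n × Fin m) (Fin n × Fin m) ℂ,
      J.PosSemidef → ptrB J = (1 : Matrix (Fin n) (Fin n) ℂ) → (M * J).trace = 1)
    (K : Matrix (Fin n × Fin m) (Fin n × Fin m) ℂ) (hK : K.IsHermitian)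
    (hpt : ptrB K = 0) : (M * K).trace = 0 := by
  classical
  set a : ℝ := (m : ℝ)⁻¹ with ha_def
  have hm : (0:ℝ) < m := by exact_mod_cast Nat.pos_of_ne_zero (NeZero.ne m)
  have ha : 0 < a := by positivity
  set C : ℝ := ∑ p : Fin n × Fin m, ∑ q : Fin n × Fin m, ‖(K p q)‖ with hC_def
  have hC : 0 ≤ C := by positivity
  set ε : ℝ := a / (C + 1) with hε_def
  have hε : 0 < ε := by positivity
  have hεC : ε * C ≤ a := by
    rw [hε_def, div_mul_eq_mul_div, div_le_iff₀ (by linarith)]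
    nlinarith
  -- the perturbed Choi matrices are PSD with partial trace 1
  have main : ∀ t : ℝ, |t| ≤ ε →
      (M * ((a:ℂ) • (1 : Matrix (Fin n × Fin m) (Fin n × Fin m) ℂ) + (t:ℂ) • K)).trace = 1 := by
    intro t ht
    apply h
    · rw [posSemidef_iff_dotProduct_mulVec]
      constructor
      · show _ = _
        rw [conjTranspose_add, conjTranspose_smul, conjTranspose_smul, conjTranspose_one, hK.eq]
        simp [Complex.star_def, Complex.conj_ofReal]
      · intro x
        set Sr : ℝ := ∑ p, Complex.normSq (x p) with hSr_def
        have hSr : 0 ≤ Sr :=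
          Finset.sum_nonneg fun _ _ => Complex.normSq_nonneg _
        have hS : star x ⬝ᵥ x = (Sr : ℝ) := by
          simp [dotProduct, hSr_def, Complex.normSq_eq_conj_mul_self]
        set q : ℂ := star x ⬝ᵥ K *ᵥ x with hq_def
        have hq : (starRingEnd ℂ) q = q := by
          calc (starRingEnd ℂ) q = star (star x ⬝ᵥ K *ᵥ x) := by rw [hq_def]; rfl
            _ = star (star (star (K *ᵥ x) ⬝ᵥ x)) := by rw [star_dotProduct]
            _ = star (K *ᵥ x) ⬝ᵥ x := star_star _
            _ = (star x ᵥ* Kᴴ) ⬝ᵥ x := by rw [star_mulVec]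
            _ = star x ⬝ᵥ Kᴴ *ᵥ x := (dotProduct_mulVec _ _ _).symm
            _ = q := by rw [hK.eq, hq_def]
        have hqre : q = (q.re : ℝ) := (Complex.conj_eq_iff_re.mp hq).symm
        have hsingle : ∀ p, Complex.normSq (x p) ≤ Sr := fun p =>
          Finset.single_le_sum (f := fun p => Complex.normSq (x p))
            (fun _ _ => Complex.normSq_nonneg _) (Finset.mem_univ p)
        have habs : ∀ p s, ‖(x p)‖ * ‖(x s)‖ ≤ Sr := by
          intro p s
          have h1 := hsingle p
          have h2 := hsingle s
          rw [← Complex.sq_norm] at h1 h2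
          nlinarith [norm_nonneg (x p), norm_nonneg (x s),
            sq_nonneg (‖(x p)‖ - ‖(x s)‖)]
        have hqbound : ‖q‖ ≤ C * Sr := by
          have : q = ∑ p, ∑ s, (starRingEnd ℂ) (x p) * (K p s * x s) := by
            simp [hq_def, dotProduct, mulVec, Finset.mul_sum]
          rw [this]
          calc ‖(∑ p, ∑ s, (starRingEnd ℂ) (x p) * (K p s * x s))‖
              ≤ ∑ p, ‖(∑ s, (starRingEnd ℂ) (x p) * (K p s * x s))‖ :=
                norm_sum_le _ _
            _ ≤ ∑ p, ∑ s, ‖((starRingEnd ℂ) (x p) * (K p s * x s))‖ :=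
                Finset.sum_le_sum fun _ _ => norm_sum_le _ _
            _ ≤ ∑ p, ∑ s, ‖(K p s)‖ * Sr := by
                refine Finset.sum_le_sum fun p _ => Finset.sum_le_sum fun s _ => ?_
                rw [norm_mul, norm_mul, Complex.norm_conj]
                calc ‖(x p)‖ * (‖(K p s)‖ * ‖(x s)‖)
                    = ‖(K p s)‖ * (‖(x p)‖ * ‖(x s)‖) := by ring
                  _ ≤ ‖(K p s)‖ * Sr := by
                      exact mul_le_mul_of_nonneg_left (habs p s) (norm_nonneg _)
            _ = C * Sr := by rw [hC_def, Finset.sum_mul]; simp [Finset.sum_mul]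
        have hval : star x ⬝ᵥ ((a:ℂ) • 1 + (t:ℂ) • K) *ᵥ x = ((a * Sr + t * q.re : ℝ) : ℂ) := by
          rw [add_mulVec, smul_mulVec, smul_mulVec, one_mulVec, dotProduct_add,
            dotProduct_smul, dotProduct_smul, smul_eq_mul, smul_eq_mul, hS, ← hq_def]
          push_cast
          linear_combination (t : ℂ) * hqre
        rw [hval]
        rw [Complex.zero_le_real]
        have h1 : |q.re| ≤ C * Sr := le_trans (Complex.abs_re_le_norm q) hqbound
        have h3 : |t * q.re| ≤ ε * (C * Sr) := by
          rw [abs_mul]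
          exact mul_le_mul ht h1 (abs_nonneg _) hε.le
        have h4 : ε * C * Sr ≤ a * Sr := mul_le_mul_of_nonneg_right hεC hSr
        nlinarith [neg_abs_le (t * q.re)]
    · ext i j
      have h0 : ∑ b, K (i, b) (j, b) = 0 := by
        have := congrFun (congrFun hpt i) j
        simpa [ptrB] using this
      simp only [ptrB, Matrix.of_apply, Matrix.add_apply, Matrix.smul_apply, smul_eq_mul]
      rw [Finset.sum_add_distrib, ← Finset.mul_sum, ← Finset.mul_sum, h0, mul_zero, add_zero]
      by_cases hij : i = j
      · subst hij
        simp [Matrix.one_apply, ha_def, Finset.card_univ, mul_comm,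
          mul_inv_cancel₀ (ne_of_gt hm)]
      · simp [Matrix.one_apply, hij, Prod.ext_iff]
  have e1 := main ε (by rw [abs_of_pos hε])
  have e2 := main (-ε) (by rw [abs_neg, abs_of_pos hε])
  have expand : ∀ t : ℝ,
      (M * ((a:ℂ) • (1 : Matrix (Fin n × Fin m) (Fin n × Fin m) ℂ) + (t:ℂ) • K)).trace
        = (a:ℂ) * M.trace + (t:ℂ) * (M * K).trace := by
    intro t
    rw [Matrix.mul_add, Matrix.mul_smul, Matrix.mul_smul, Matrix.mul_one, trace_add,
      trace_smul, trace_smul, smul_eq_mul, smul_eq_mul]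
  rw [expand] at e1 e2
  have : (2 * ε : ℂ) * (M * K).trace = 0 := by
    push_cast at e1 e2 ⊢
    linear_combination e1 - e2
  have h2ε : (2 * ε : ℂ) ≠ 0 := by
    simp only [ne_eq, mul_eq_zero]
    push_neg
    exact ⟨two_ne_zero, Complex.ofReal_ne_zero.mpr (ne_of_gt hε)⟩
  exact (mul_eq_zero.mp this).resolve_left h2ε

/-- Prepare-and-trace lemma: if a Hermitian operator `M` on `A ⊗ B` satisfies
`Tr[M J^E] = 1` for every CPTP map `E : L(A) → L(B)` (characterized by its Choi
operator `J` being PSD with `Tr_B J = 1_A`), then `M = ρ ⊗ 1_B` with `Tr[ρ] = 1`;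
if in addition `M ≥ 0`, then `ρ` is a density matrix. -/
theorem stmt11 {n m : ℕ} [NeZero n] [NeZero m]
    (M : Matrix (Fin n × Fin m) (Fin n × Fin m) ℂ)
    (hM : M.IsHermitian)
    (h : ∀ J : Matrix (Fin n × Fin m) (Fin n × Fin m) ℂ,
      J.PosSemidef → ptrB J = (1 : Matrix (Fin n) (Fin n) ℂ) → (M * J).trace = 1) :
    ∃ ρ : Matrix (Fin n) (Fin n) ℂ,
      M = ρ ⊗ₖ (1 : Matrix (Fin m) (Fin m) ℂ) ∧ ρ.trace = 1 ∧
      (M.PosSemidef → ρ.PosSemidef) := by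
  classical
  have key' := key M h
  -- traces of M against combinations of matrix units
  have tr4 : ∀ (p q : Fin n × Fin m) (c d : ℂ),
      (M * (Matrix.single p q c + Matrix.single q p d)).trace
        = c * M q p + d * M p q := by
    intro p q c d
    rw [Matrix.mul_add, Matrix.trace_add, trace_mul_std, trace_mul_std]
  -- off-diagonal (in B) entries of M vanish
  have offdiag : ∀ (i j : Fin n) (a b : Fin m), a ≠ b → M (i, a) (j, b) = 0 := by
    intro i j a b hab
    set p : Fin n × Fin m := (i, a) with hp
    set q : Fin n × Fin m := (j, b) with hq
    have herm1 : (Matrix.single p q (1:ℂ) + Matrix.single q p 1).IsHermitian := by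
      show _ = _
      rw [Matrix.conjTranspose_add, std_conjTranspose, std_conjTranspose]
      simp [add_comm]
    have herm2 : (Matrix.single p q Complex.I
        + Matrix.single q p (-Complex.I)).IsHermitian := by
      show _ = _
      rw [Matrix.conjTranspose_add, std_conjTranspose, std_conjTranspose]
      simp [add_comm, Complex.star_def]
    have pt1 : ptrB (Matrix.single p q (1:ℂ) + Matrix.single q p 1) = 0 := by
      rw [ptrB_add, ptrB_std_ne _ _ _ _ _ hab, ptrB_std_ne _ _ _ _ _ (Ne.symm hab)]
      simp
    have pt2 : ptrB (Matrix.single p q Complex.I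
        + Matrix.single q p (-Complex.I)) = 0 := by
      rw [ptrB_add, ptrB_std_ne _ _ _ _ _ hab, ptrB_std_ne _ _ _ _ _ (Ne.symm hab)]
      simp
    have e1 := key' _ herm1 pt1
    have e2 := key' _ herm2 pt2
    rw [tr4] at e1 e2
    have hwz : M q p = M p q := by
      have h' : Complex.I * (M q p - M p q) = 0 := by linear_combination e2
      rcases mul_eq_zero.mp h' with h' | h'
      · exact absurd h' Complex.I_ne_zero
      · exact sub_eq_zero.mp h'
    linear_combination e1 / 2 - hwz / 2
  -- the diagonal (in B) blocks are independent of the B index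
  have diag_eq : ∀ (i j : Fin n) (a : Fin m), M (i, a) (j, a) = M (i, 0) (j, 0) := by
    intro i j a
    set p : Fin n × Fin m := (i, a) with hp
    set q : Fin n × Fin m := (j, a) with hq
    set p0 : Fin n × Fin m := (i, 0) with hp0
    set q0 : Fin n × Fin m := (j, 0) with hq0
    have herm3 : ((Matrix.single p q (1:ℂ) + Matrix.single q p 1)
        - (Matrix.single p0 q0 1 + Matrix.single q0 p0 1)).IsHermitian := by
      show _ = _
      rw [Matrix.conjTranspose_sub, Matrix.conjTranspose_add, Matrix.conjTranspose_add,
        std_conjTranspose, std_conjTranspose, std_conjTranspose, std_conjTranspose]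
      simp [add_comm]
    have herm4 : ((Matrix.single p q Complex.I + Matrix.single q p (-Complex.I))
        - (Matrix.single p0 q0 Complex.I
            + Matrix.single q0 p0 (-Complex.I))).IsHermitian := by
      show _ = _
      rw [Matrix.conjTranspose_sub, Matrix.conjTranspose_add, Matrix.conjTranspose_add,
        std_conjTranspose, std_conjTranspose, std_conjTranspose, std_conjTranspose]
      simp [add_comm, Complex.star_def]
    have pt3 : ptrB ((Matrix.single p q (1:ℂ) + Matrix.single q p 1)
        - (Matrix.single p0 q0 1 + Matrix.single q0 p0 1)) = 0 := by
      rw [ptrB_sub, ptrB_add, ptrB_add, ptrB_std_eq, ptrB_std_eq, ptrB_std_eq, ptrB_std_eq]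
      simp
    have pt4 : ptrB ((Matrix.single p q Complex.I
          + Matrix.single q p (-Complex.I))
        - (Matrix.single p0 q0 Complex.I
          + Matrix.single q0 p0 (-Complex.I))) = 0 := by
      rw [ptrB_sub, ptrB_add, ptrB_add, ptrB_std_eq, ptrB_std_eq, ptrB_std_eq, ptrB_std_eq]
      simp
    have e3 := key' _ herm3 pt3
    have e4 := key' _ herm4 pt4
    have expand : ∀ (c d : ℂ),
        (M * ((Matrix.single p q c + Matrix.single q p d)
          - (Matrix.single p0 q0 c + Matrix.single q0 p0 d))).trace
        = (c * M q p + d * M p q) - (c * M q0 p0 + d * M p0 q0) := by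
      intro c d
      rw [Matrix.mul_sub, Matrix.trace_sub, tr4, tr4]
    rw [expand] at e3 e4
    have h4' : M q p - M p q = M q0 p0 - M p0 q0 := by
      have h' : Complex.I * ((M q p - M p q) - (M q0 p0 - M p0 q0)) = 0 := by
        linear_combination e4
      rcases mul_eq_zero.mp h' with h' | h'
      · exact absurd h' Complex.I_ne_zero
      · exact sub_eq_zero.mp h'
    linear_combination e3 / 2 - h4' / 2
  -- construct ρ
  refine ⟨M.submatrix (fun i => (i, (0 : Fin m))) (fun j => (j, (0 : Fin m))), ?_, ?_, ?_⟩
  · ext ⟨i, a⟩ ⟨j, b⟩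
    rw [Matrix.kroneckerMap_apply]
    by_cases hab : a = b
    · subst hab
      simp [Matrix.one_apply, Matrix.submatrix_apply, diag_eq i j a]
    · simp [Matrix.one_apply, hab, offdiag i j a b hab]
  · -- trace condition, from J = (1/m) • 1 realized as a diagonal matrix
    have hm : (0:ℝ) < m := by exact_mod_cast Nat.pos_of_ne_zero (NeZero.ne m)
    set J : Matrix (Fin n × Fin m) (Fin n × Fin m) ℂ :=
      Matrix.diagonal (fun _ => (((m : ℝ)⁻¹ : ℝ) : ℂ)) with hJ
    have hpsd : J.PosSemidef := by
      apply Matrix.PosSemidef.diagonal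
      intro _
      simp only [Pi.zero_apply]
      rw [Complex.zero_le_real]
      positivity
    have hpt : ptrB J = 1 := by
      ext i j
      simp only [ptrB, Matrix.of_apply, hJ, Matrix.diagonal_apply]
      by_cases hij : i = j
      · subst hij
        simp only [Matrix.one_apply_eq, if_true]
        simp only [Finset.sum_const, Finset.card_univ, Fintype.card_fin, nsmul_eq_mul]
        rw [← Complex.ofReal_natCast, ← Complex.ofReal_mul]
        rw [mul_inv_cancel₀ (ne_of_gt hm)]
        simp
      · rw [Matrix.one_apply_ne hij]
        apply Finset.sum_eq_zero
        intro b _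
        rw [if_neg]
        simp [Prod.ext_iff, hij]
    have htr := h J hpsd hpt
    have htrM : (M * J).trace = (((m : ℝ)⁻¹ : ℝ) : ℂ) * M.trace := by
      rw [hJ]
      simp [Matrix.trace, Matrix.diag, Matrix.mul_diagonal, Finset.mul_sum, mul_comm]
    have htrM2 : M.trace = (m : ℂ) *
        (M.submatrix (fun i => (i, (0 : Fin m))) (fun j => (j, (0 : Fin m)))).trace := by
      have h1 : M.trace = ∑ i : Fin n, ∑ a : Fin m, M (i, a) (i, a) := by
        rw [Matrix.trace, Fintype.sum_prod_type]; rfl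
      have h2 : ∀ i : Fin n, ∑ a : Fin m, M (i, a) (i, a) = (m : ℂ) * M (i, 0) (i, 0) := by
        intro i
        rw [Finset.sum_congr rfl fun a _ => diag_eq i i a]
        simp [Finset.card_univ, mul_comm]
      rw [h1, Finset.sum_congr rfl fun i _ => h2 i, Matrix.trace]
      simp [Matrix.diag, Finset.mul_sum]
    rw [htrM, htrM2] at htr
    have hminv : (((m : ℝ)⁻¹ : ℝ) : ℂ) * (m : ℂ) = 1 := by
      rw [← Complex.ofReal_natCast, ← Complex.ofReal_mul, inv_mul_cancel₀ (ne_of_gt hm)]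
      simp
    linear_combination htr - (M.submatrix (fun i => (i, (0 : Fin m)))
      (fun j => (j, (0 : Fin m)))).trace * hminv
  · intro hps
    exact hps.submatrix _
end

section
/- If the Choi operator J^θ of a linear map θ : L(A₁⊗A₂) → L(B₁⊗B₂) satisfies (i) J^θ ≥ 0, (ii) Tr_{B₁B₂}[J^θ] = 1_{A₁A₂}, and (iii) Tr_{B₂}[J^θ] = Tr_{A₂B₂}[J^θ] ⊗ 1_{A₂}/d_{A₂}, then for every CPTP map E : L(B₁) → L(A₂) the induced map θ(E) with Choi operator J^θ ⋆ J^E is trace-preserving, i.e., Tr_{B₂}[J^θ ⋆ J^E] = 1_{A₁}. -/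
open Matrix
open scoped ComplexOrder

/-- If the Choi operator `J^θ` of a linear map `θ : L(A₁⊗A₂) → L(B₁⊗B₂)` (systems
ordered `A₁ A₂ B₁ B₂`) is (i) PSD, (ii) satisfies `Tr_{B₁B₂}[J^θ] = 1`, and
(iii) `Tr_{B₂}[J^θ] = Tr_{A₂B₂}[J^θ] ⊗ 1_{A₂}/d_{A₂}`, then for every channel Choi
operator `J^E` (PSD with `Tr_{A₂}J^E = 1_{B₁}`) the link product `J^θ ⋆ J^E`
satisfies `Tr_{B₂}[J^θ ⋆ J^E] = 1_{A₁}`. -/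
theorem stmt13 {a1 a2 b1 b2 : ℕ} [NeZero a2]
    (J : Matrix (Fin a1 × Fin a2 × Fin b1 × Fin b2) (Fin a1 × Fin a2 × Fin b1 × Fin b2) ℂ)
    (hpos : J.PosSemidef)
    (htp : ∀ p q : Fin a1 × Fin a2,
      (∑ x : Fin b1, ∑ y : Fin b2, J (p.1, p.2, x, y) (q.1, q.2, x, y)) =
        (1 : Matrix (Fin a1 × Fin a2) (Fin a1 × Fin a2) ℂ) p q)
    (hns : ∀ p q : Fin a1 × Fin a2 × Fin b1,
      (∑ y : Fin b2, J (p.1, p.2.1, p.2.2, y) (q.1, q.2.1, q.2.2, y)) =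
        (∑ x2 : Fin a2, ∑ y2 : Fin b2, J (p.1, x2, p.2.2, y2) (q.1, x2, q.2.2, y2)) *
          (if p.2.1 = q.2.1 then ((a2 : ℂ))⁻¹ else 0))
    (JE : Matrix (Fin b1 × Fin a2) (Fin b1 × Fin a2) ℂ)
    (hJE : JE.PosSemidef)
    (hJEtp : ∀ i j : Fin b1,
      (∑ x : Fin a2, JE (i, x) (j, x)) = (1 : Matrix (Fin b1) (Fin b1) ℂ) i j) :
    ∀ i j : Fin a1,
      (∑ y : Fin b2, ∑ c1 : Fin b1, ∑ y2 : Fin a2, ∑ d1 : Fin b1, ∑ x2 : Fin a2,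
        J (i, y2, c1, y) (j, x2, d1, y) * JE (c1, y2) (d1, x2)) =
      (1 : Matrix (Fin a1) (Fin a1) ℂ) i j := by
  intro i j
  -- abbreviation for the A₂B₂-traced operator
  set S : Fin b1 → Fin b1 → ℂ := fun c1 d1 =>
    ∑ x2 : Fin a2, ∑ y2 : Fin b2, J (i, x2, c1, y2) (j, x2, d1, y2) with hS
  have step1 : (∑ y : Fin b2, ∑ c1 : Fin b1, ∑ y2 : Fin a2, ∑ d1 : Fin b1, ∑ x2 : Fin a2,
        J (i, y2, c1, y) (j, x2, d1, y) * JE (c1, y2) (d1, x2))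
      = ∑ c1 : Fin b1, ∑ y2 : Fin a2, ∑ d1 : Fin b1, ∑ x2 : Fin a2,
        (∑ y : Fin b2, J (i, y2, c1, y) (j, x2, d1, y)) * JE (c1, y2) (d1, x2) := by
    rw [Finset.sum_comm]
    refine Finset.sum_congr rfl fun c1 _ => ?_
    rw [Finset.sum_comm]
    refine Finset.sum_congr rfl fun y2 _ => ?_
    rw [Finset.sum_comm]
    refine Finset.sum_congr rfl fun d1 _ => ?_
    rw [Finset.sum_comm]
    refine Finset.sum_congr rfl fun x2 _ => ?_
    rw [Finset.sum_mul]
  rw [step1]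
  have step2 : ∀ c1 : Fin b1, (∑ y2 : Fin a2, ∑ d1 : Fin b1, ∑ x2 : Fin a2,
        (∑ y : Fin b2, J (i, y2, c1, y) (j, x2, d1, y)) * JE (c1, y2) (d1, x2))
      = S c1 c1 * (a2 : ℂ)⁻¹ := by
    intro c1
    have h1 : ∀ y2 : Fin a2, ∀ d1 : Fin b1, (∑ x2 : Fin a2,
          (∑ y : Fin b2, J (i, y2, c1, y) (j, x2, d1, y)) * JE (c1, y2) (d1, x2))
        = S c1 d1 * (a2 : ℂ)⁻¹ * JE (c1, y2) (d1, y2) := by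
      intro y2 d1
      have : ∀ x2 : Fin a2,
          (∑ y : Fin b2, J (i, y2, c1, y) (j, x2, d1, y)) * JE (c1, y2) (d1, x2)
          = (if y2 = x2 then S c1 d1 * (a2 : ℂ)⁻¹ * JE (c1, y2) (d1, x2) else 0) := by
        intro x2
        rw [hns (i, y2, c1) (j, x2, d1)]
        by_cases h : y2 = x2 <;> simp [h, hS, mul_comm, mul_assoc, mul_left_comm]
      rw [Finset.sum_congr rfl fun x2 _ => this x2, Finset.sum_ite_eq]
      simp
    calc (∑ y2 : Fin a2, ∑ d1 : Fin b1, ∑ x2 : Fin a2,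
          (∑ y : Fin b2, J (i, y2, c1, y) (j, x2, d1, y)) * JE (c1, y2) (d1, x2))
        = ∑ y2 : Fin a2, ∑ d1 : Fin b1, S c1 d1 * (a2 : ℂ)⁻¹ * JE (c1, y2) (d1, y2) := by
          exact Finset.sum_congr rfl fun y2 _ => Finset.sum_congr rfl fun d1 _ => h1 y2 d1
      _ = ∑ d1 : Fin b1, S c1 d1 * (a2 : ℂ)⁻¹ * (∑ y2 : Fin a2, JE (c1, y2) (d1, y2)) := by
          rw [Finset.sum_comm]
          exact Finset.sum_congr rfl fun d1 _ => (Finset.mul_sum _ _ _).symm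
      _ = S c1 c1 * (a2 : ℂ)⁻¹ := by
          have : ∀ d1 : Fin b1, S c1 d1 * (a2 : ℂ)⁻¹ * (∑ y2 : Fin a2, JE (c1, y2) (d1, y2))
              = if c1 = d1 then S c1 d1 * (a2 : ℂ)⁻¹ else 0 := by
            intro d1
            rw [hJEtp c1 d1, Matrix.one_apply]
            by_cases h : c1 = d1 <;> simp [h]
          rw [Finset.sum_congr rfl fun d1 _ => this d1, Finset.sum_ite_eq]
          simp
  rw [Finset.sum_congr rfl fun c1 _ => step2 c1]
  have hsum : (∑ c1 : Fin b1, S c1 c1) = (a2 : ℂ) * (if i = j then 1 else 0) := by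
    have : (∑ c1 : Fin b1, S c1 c1)
        = ∑ x2 : Fin a2, ∑ c1 : Fin b1, ∑ y2 : Fin b2, J (i, x2, c1, y2) (j, x2, c1, y2) :=
      Finset.sum_comm
    rw [this]
    have h2 : ∀ x2 : Fin a2, (∑ c1 : Fin b1, ∑ y2 : Fin b2, J (i, x2, c1, y2) (j, x2, c1, y2))
        = if i = j then 1 else 0 := by
      intro x2
      rw [htp (i, x2) (j, x2), Matrix.one_apply]
      by_cases h : i = j <;> simp [h, Prod.ext_iff]
    rw [Finset.sum_congr rfl fun x2 _ => h2 x2]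
    simp [mul_comm]
  rw [← Finset.sum_mul, hsum, Matrix.one_apply]
  have ha : ((a2 : ℂ)) ≠ 0 := by
    exact_mod_cast Nat.cast_ne_zero.mpr (NeZero.ne a2)
  field_simp
end

section
/- Superchannel Kraus decomposition: if the Choi operator of a superchannel θ decomposes as J^θ = Σᵢ vec(Nᵢ) vec(Nᵢ)†, then for any channel E with Choi operator J^E ∈ L(B₁⊗A₂), the Choi operator of the output channel θ(E) satisfies J^{θ(E)} = Σᵢ Kᵢ J^E Kᵢ† with Kᵢ := mat_{B₁}(vec_{A₁}(Nᵢ)), i.e., the induced map f_θ on Choi operators is completely positive with these Kraus operators. -/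
open Matrix
open scoped ComplexOrder
open scoped Kronecker

/-- Full vectorization `vec(N) := (1 ⊗ N)|Γ⟩` of an operator `N : α → β`. -/
noncomputable def vecOp {α β : Type*} [Fintype α] [DecidableEq α]
    (N : Matrix β α ℂ) : α × β → ℂ :=
  ((1 : Matrix α α ℂ) ⊗ₖ N).mulVec (fun p => if p.1 = p.2 then 1 else 0)

/-- The link product of a superchannel Choi operator `J^θ` on `(A₁⊗A₂) ⊗ (B₁⊗B₂)`
with the Choi operator `J^E` of a channel `E : L(B₁) → L(A₂)`, giving
`J^{θ(E)} = J^θ ⋆ J^E` on `A₁ ⊗ B₂` (link product over `B₁ A₂`), in components. -/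
noncomputable def linkSC {a1 a2 b1 b2 : ℕ}
    (J : Matrix ((Fin a1 × Fin a2) × Fin b1 × Fin b2) ((Fin a1 × Fin a2) × Fin b1 × Fin b2) ℂ)
    (JE : Matrix (Fin b1 × Fin a2) (Fin b1 × Fin a2) ℂ) :
    Matrix (Fin a1 × Fin b2) (Fin a1 × Fin b2) ℂ :=
  Matrix.of fun p q => ∑ c1 : Fin b1, ∑ y2 : Fin a2, ∑ d1 : Fin b1, ∑ x2 : Fin a2,
    J ((p.1, y2), (c1, p.2)) ((q.1, x2), (d1, q.2)) * JE (c1, y2) (d1, x2)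

/-- The Kraus operator `K := mat_{B₁}(vec_{A₁}(N)) : B₁ ⊗ A₂ → A₁ ⊗ B₂` obtained from
`N : A₁ ⊗ A₂ → B₁ ⊗ B₂` by partial vectorization over `A₁` followed by partial
matricization over `B₁`, written out in components. -/
def krausOfN {a1 a2 b1 b2 : ℕ}
    (N : Matrix (Fin b1 × Fin b2) (Fin a1 × Fin a2) ℂ) :
    Matrix (Fin a1 × Fin b2) (Fin b1 × Fin a2) ℂ :=
  Matrix.of fun p q => N (q.1, p.2) (p.1, q.2)


set_option linter.unusedVariables false in
private lemma vecOp_apply' {α β : Type*} [Fintype α] [DecidableEq α]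
    (N : Matrix β α ℂ) (x : α) (y : β) : vecOp N (x, y) = N y x := by
  simp [vecOp, Matrix.mulVec, dotProduct, Matrix.kroneckerMap_apply,
    Fintype.sum_prod_type, Matrix.one_apply, ite_and, mul_ite, mul_comm]

set_option linter.unusedVariables false in
private lemma sum_perm5 {M : Type*} [AddCommMonoid M] {α β γ δ ε : Type*}
    [Fintype α] [Fintype β] [Fintype γ] [Fintype δ] [Fintype ε]
    (f : α → β → γ → δ → ε → M) :
    (∑ a, ∑ b, ∑ c, ∑ d, ∑ e, f a b c d e)
      = ∑ e, ∑ c, ∑ d, ∑ a, ∑ b, f a b c d e :=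
  calc (∑ a, ∑ b, ∑ c, ∑ d, ∑ e, f a b c d e)
      = ∑ a, ∑ b, ∑ c, ∑ e, ∑ d, f a b c d e :=
        Finset.sum_congr rfl fun a _ => Finset.sum_congr rfl fun b _ =>
          Finset.sum_congr rfl fun c _ => Finset.sum_comm
    _ = ∑ a, ∑ b, ∑ e, ∑ c, ∑ d, f a b c d e :=
        Finset.sum_congr rfl fun a _ => Finset.sum_congr rfl fun b _ => Finset.sum_comm
    _ = ∑ a, ∑ e, ∑ b, ∑ c, ∑ d, f a b c d e :=
        Finset.sum_congr rfl fun a _ => Finset.sum_comm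
    _ = ∑ e, ∑ a, ∑ b, ∑ c, ∑ d, f a b c d e := Finset.sum_comm
    _ = ∑ e, ∑ a, ∑ c, ∑ b, ∑ d, f a b c d e :=
        Finset.sum_congr rfl fun e _ => Finset.sum_congr rfl fun a _ => Finset.sum_comm
    _ = ∑ e, ∑ c, ∑ a, ∑ b, ∑ d, f a b c d e :=
        Finset.sum_congr rfl fun e _ => Finset.sum_comm
    _ = ∑ e, ∑ c, ∑ a, ∑ d, ∑ b, f a b c d e :=
        Finset.sum_congr rfl fun e _ => Finset.sum_congr rfl fun c _ =>
          Finset.sum_congr rfl fun a _ => Finset.sum_comm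
    _ = ∑ e, ∑ c, ∑ d, ∑ a, ∑ b, f a b c d e :=
        Finset.sum_congr rfl fun e _ => Finset.sum_congr rfl fun c _ => Finset.sum_comm

/-- Superchannel Kraus decomposition: if `J^θ = Σᵢ vec(Nᵢ) vec(Nᵢ)†`, then for any
channel `E` with Choi operator `J^E`, the output Choi operator satisfies
`J^{θ(E)} = J^θ ⋆ J^E = Σᵢ Kᵢ J^E Kᵢ†` with `Kᵢ := mat_{B₁}(vec_{A₁}(Nᵢ))`. -/
theorem stmt15 {a1 a2 b1 b2 r : ℕ}
    (J : Matrix ((Fin a1 × Fin a2) × Fin b1 × Fin b2) ((Fin a1 × Fin a2) × Fin b1 × Fin b2) ℂ)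
    (N : Fin r → Matrix (Fin b1 × Fin b2) (Fin a1 × Fin a2) ℂ)
    (hJ : J = ∑ i, vecMulVec (vecOp (N i)) (star (vecOp (N i))))
    (JE : Matrix (Fin b1 × Fin a2) (Fin b1 × Fin a2) ℂ)
    (hJE : JE.PosSemidef)
    (hJEtp : ∀ i j : Fin b1,
      (∑ x : Fin a2, JE (i, x) (j, x)) = (1 : Matrix (Fin b1) (Fin b1) ℂ) i j) :
    linkSC J JE = ∑ i, krausOfN (N i) * JE * (krausOfN (N i))ᴴ := by
  subst hJ
  ext p q
  simp only [linkSC, krausOfN, Matrix.sum_apply, Matrix.mul_apply, vecMulVec_apply,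
    Pi.star_apply, vecOp_apply', conjTranspose_apply, of_apply, Fintype.sum_prod_type,
    Finset.sum_mul, Finset.mul_sum]
  rw [sum_perm5]
  refine Finset.sum_congr rfl fun i _ => Finset.sum_congr rfl fun d1 _ =>
    Finset.sum_congr rfl fun x2 _ => Finset.sum_congr rfl fun c1 _ =>
    Finset.sum_congr rfl fun y2 _ => ?_
  ring
end

section
/- EB superchannel characterization: a superchannel θ : L(A₁⊗A₂) → L(B₁⊗B₂) produces, for every tripartite state ρ_{RA₁A₂} fed sequentially through it, an output state J^θ ⋆ ρ_{RA₁A₂} that is separable across the bipartition R | B₁B₂ if and only if the Choi operator J^θ is separable across the bipartition A₁A₂ | B₁B₂. -/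
open Matrix
open scoped ComplexOrder
open scoped Kronecker

/-- A positive operator on `α ⊗ β` is separable (across `α | β`) if it is a finite sum
of tensor products of positive semidefinite operators. -/
def Separable {α β : Type*} [Fintype α] [Fintype β]
    (M : Matrix (α × β) (α × β) ℂ) : Prop :=
  ∃ (k : ℕ) (X : Fin k → Matrix α α ℂ) (Y : Fin k → Matrix β β ℂ),
    (∀ i, (X i).PosSemidef) ∧ (∀ i, (Y i).PosSemidef) ∧ M = ∑ i, X i ⊗ₖ Y i

/-- The output state `J^θ ⋆ ρ := Tr_{A₁A₂}[(1_R ⊗ J^θ)(ρ^{T_{A₁A₂}} ⊗ 1_{B₁B₂})]`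
obtained by feeding the `A₁A₂` parts of a tripartite state `ρ_{RA₁A₂}` sequentially
through the superchannel with Choi operator `J^θ`, written out in components. -/
noncomputable def outState {r a1 a2 b1 b2 : ℕ}
    (J : Matrix ((Fin a1 × Fin a2) × Fin b1 × Fin b2) ((Fin a1 × Fin a2) × Fin b1 × Fin b2) ℂ)
    (ρ : Matrix (Fin r × Fin a1 × Fin a2) (Fin r × Fin a1 × Fin a2) ℂ) :
    Matrix (Fin r × Fin b1 × Fin b2) (Fin r × Fin b1 × Fin b2) ℂ :=
  Matrix.of fun p q => ∑ a : Fin a1 × Fin a2, ∑ a' : Fin a1 × Fin a2,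
    J (a, p.2) (a', q.2) * ρ (p.1, a) (q.1, a')

/-! ### Auxiliary lemmas -/

lemma EB.sum_rotate {ι κ μ : Type*} [Fintype ι] [Fintype κ] [Fintype μ] (f : ι → κ → μ → ℂ) :
    (∑ x : ι, ∑ y : κ, ∑ c : μ, f x y c) = ∑ c : μ, ∑ x : ι, ∑ y : κ, f x y c :=
  calc (∑ x : ι, ∑ y : κ, ∑ c : μ, f x y c)
      = ∑ y : κ, ∑ x : ι, ∑ c : μ, f x y c := Finset.sum_comm
    _ = ∑ y : κ, ∑ c : μ, ∑ x : ι, f x y c :=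
        Finset.sum_congr rfl fun _ _ => Finset.sum_comm
    _ = ∑ c : μ, ∑ y : κ, ∑ x : ι, f x y c := Finset.sum_comm
    _ = ∑ c : μ, ∑ x : ι, ∑ y : κ, f x y c :=
        Finset.sum_congr rfl fun _ _ => Finset.sum_comm

lemma EB.psd_sum {m ι : Type*} [Fintype m] (s : Finset ι) (f : ι → Matrix m m ℂ)
    (h : ∀ i ∈ s, (f i).PosSemidef) : (∑ i ∈ s, f i).PosSemidef := by
  classical
  induction s using Finset.cons_induction with
  | empty => simpa using Matrix.PosSemidef.zero
  | cons a s ha ih =>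
    rw [Finset.sum_cons]
    exact (h a (Finset.mem_cons_self a s)).add (ih fun i hi => h i (Finset.mem_cons_of_mem hi))

lemma EB.psd_natSmul {m : Type*} [Fintype m] {M : Matrix m m ℂ} (hM : M.PosSemidef) (n : ℕ) :
    (((n : ℂ)) • M).PosSemidef := by
  rw [Nat.cast_smul_eq_nsmul]
  induction n with
  | zero => simpa using Matrix.PosSemidef.zero
  | succ k ih => rw [succ_nsmul]; exact ih.add hM

/-- Contracting the `A` part of a bipartite PSD matrix with a PSD matrix gives a PSD matrix. -/
lemma EB.contract_psd {R A : Type*} [Fintype R] [Fintype A] [DecidableEq R]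
    {X : Matrix A A ℂ} {ρ : Matrix (R × A) (R × A) ℂ}
    (hX : X.PosSemidef) (hρ : ρ.PosSemidef) :
    (Matrix.of fun r r' : R => ∑ a : A, ∑ a' : A, X a a' * ρ (r, a) (r', a')).PosSemidef := by
  classical
  open scoped MatrixOrder in
  obtain ⟨C, hC⟩ :=
    CStarAlgebra.nonneg_iff_eq_star_mul_self.mp (Matrix.nonneg_iff_posSemidef.mpr hX)
  rw [star_eq_conjTranspose] at hC
  subst hC
  have key : (Matrix.of fun r r' : R => ∑ a : A, ∑ a' : A, (Cᴴ * C) a a' * ρ (r, a) (r', a'))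
      = ∑ c : A, ((Matrix.of fun (p : R × A) (r : R) => if p.1 = r then C c p.2 else 0)ᴴ * ρ *
          (Matrix.of fun (p : R × A) (r : R) => if p.1 = r then C c p.2 else 0)) := by
    ext r r'
    simp only [Matrix.sum_apply, Matrix.mul_apply, Matrix.conjTranspose_apply, Matrix.of_apply,
      Fintype.sum_prod_type, ite_mul, mul_ite, zero_mul, mul_zero, apply_ite star, star_zero]
    simp only [ite_mul, zero_mul, Finset.sum_ite_irrel, Finset.sum_const_zero,
      Finset.sum_ite_eq', Finset.mem_univ, if_true, Finset.sum_mul, Finset.mul_sum]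
    rw [EB.sum_rotate fun x y c => star (C c x) * C c y * ρ (r, x) (r', y)]
    refine Finset.sum_congr rfl fun c _ => Finset.sum_comm.trans ?_
    exact Finset.sum_congr rfl fun y _ => Finset.sum_congr rfl fun x _ => by ring
  rw [key]
  exact EB.psd_sum _ _ fun c _ => hρ.conjTranspose_mul_mul_same _

/-- The (normalized) maximally entangled state between `R = Fin (a1*a2)` and `A₁A₂`. -/
noncomputable def EB.ment (a1 a2 : ℕ) :
    Matrix (Fin (a1 * a2) × Fin a1 × Fin a2) (Fin (a1 * a2) × Fin a1 × Fin a2) ℂ :=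
  Matrix.of fun p q => ((a1 * a2 : ℕ) : ℂ)⁻¹ *
    ((if finProdFinEquiv p.2 = p.1 then 1 else 0) * (if finProdFinEquiv q.2 = q.1 then 1 else 0))

lemma EB.ment_psd {a1 a2 : ℕ} : (EB.ment a1 a2).PosSemidef := by
  refine Matrix.PosSemidef.of_dotProduct_mulVec_nonneg ?_ ?_
  · ext p q
    simp only [EB.ment, Matrix.conjTranspose_apply, Matrix.of_apply, star_mul', star_inv₀,
      star_natCast, apply_ite star, star_one, star_zero]
    push_cast
    ring
  · intro x
    have : star x ⬝ᵥ (EB.ment a1 a2) *ᵥ x = ((a1 * a2 : ℕ) : ℂ)⁻¹ *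
        (star (∑ q, (if finProdFinEquiv q.2 = q.1 then 1 else 0) * x q) *
          (∑ q, (if finProdFinEquiv q.2 = q.1 then 1 else 0) * x q)) := by
      simp only [dotProduct, Matrix.mulVec, EB.ment, Matrix.of_apply, dotProduct,
        Finset.mul_sum, Finset.sum_mul, star_sum, star_mul', apply_ite star, star_one, star_zero,
        Pi.star_apply]
      rw [Finset.sum_comm]
      refine Finset.sum_congr rfl fun p _ => Finset.sum_congr rfl fun q _ => by ring
    rw [this]
    refine mul_nonneg ?_ (star_mul_self_nonneg _)
    rw [← Complex.ofReal_natCast, ← Complex.ofReal_inv]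
    exact Complex.zero_le_real.mpr (by positivity)

lemma EB.ment_trace {a1 a2 : ℕ} (hn : a1 * a2 ≠ 0) : (EB.ment a1 a2).trace = 1 := by
  have hii : ∀ (c : Prop) [Decidable c], ((if c then (1:ℂ) else 0) * (if c then 1 else 0))
      = if c then 1 else 0 := by intro c _; by_cases h : c <;> simp [h]
  simp only [Matrix.trace, Matrix.diag, EB.ment, Matrix.of_apply, hii, mul_ite, mul_one, mul_zero]
  rw [Fintype.sum_prod_type, Finset.sum_comm]
  simp only [Finset.sum_ite_eq, Finset.mem_univ, if_true, Finset.sum_const, Finset.card_univ,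
    Fintype.card_prod, Fintype.card_fin, nsmul_eq_mul]
  push_cast
  rw [mul_inv_cancel₀]
  exact_mod_cast Nat.cast_ne_zero.mpr hn

lemma EB.out_ment {a1 a2 b1 b2 : ℕ}
    (J : Matrix ((Fin a1 × Fin a2) × Fin b1 × Fin b2) ((Fin a1 × Fin a2) × Fin b1 × Fin b2) ℂ)
    (p q : Fin (a1 * a2) × Fin b1 × Fin b2) :
    outState J (EB.ment a1 a2) p q = ((a1 * a2 : ℕ) : ℂ)⁻¹ *
      J (finProdFinEquiv.symm p.1, p.2) (finProdFinEquiv.symm q.1, q.2) := by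
  simp only [outState, Matrix.of_apply, EB.ment]
  have hc : ∀ (r : Fin (a1 * a2)) (a : Fin a1 × Fin a2),
      (finProdFinEquiv a = r) ↔ (a = finProdFinEquiv.symm r) := by
    intro r a
    exact ⟨fun h => by rw [← h, Equiv.symm_apply_apply], fun h => by rw [h, Equiv.apply_symm_apply]⟩
  simp only [hc, mul_ite, mul_one, mul_zero, ite_mul, zero_mul,
    Finset.sum_ite_irrel, Finset.sum_const_zero, Finset.sum_ite_eq', Finset.mem_univ, if_true]
  ring

/-! ### The main theorem -/

/-- EB superchannel characterization: a superchannel `θ` (Choi operator PSD, TP, and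
no-signaling) outputs a state separable across `R | B₁B₂` for every tripartite input
state `ρ_{RA₁A₂}` iff its Choi operator `J^θ` is separable across `A₁A₂ | B₁B₂`. -/
theorem stmt18 {a1 a2 b1 b2 : ℕ}
    (J : Matrix ((Fin a1 × Fin a2) × Fin b1 × Fin b2) ((Fin a1 × Fin a2) × Fin b1 × Fin b2) ℂ)
    (hpos : J.PosSemidef)
    (htp : ∀ p q : Fin a1 × Fin a2,
      (∑ b : Fin b1 × Fin b2, J (p, b) (q, b)) =
        (1 : Matrix (Fin a1 × Fin a2) (Fin a1 × Fin a2) ℂ) p q)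
    (hns : ∀ p q : (Fin a1 × Fin a2) × Fin b1,
      (∑ y : Fin b2, J (p.1, p.2, y) (q.1, q.2, y)) =
        (∑ x2 : Fin a2, ∑ y2 : Fin b2, J ((p.1.1, x2), p.2, y2) ((q.1.1, x2), q.2, y2)) *
          (if p.1.2 = q.1.2 then ((a2 : ℂ))⁻¹ else 0)) :
    (∀ (r : ℕ) (ρ : Matrix (Fin r × Fin a1 × Fin a2) (Fin r × Fin a1 × Fin a2) ℂ),
      ρ.PosSemidef → ρ.trace = 1 →
        Separable (α := Fin r) (β := Fin b1 × Fin b2) (outState J ρ)) ↔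
    Separable (α := Fin a1 × Fin a2) (β := Fin b1 × Fin b2) J := by
  constructor
  · -- forward direction: feed the maximally entangled state
    intro h
    by_cases hn : a1 * a2 = 0
    · -- degenerate case: the `A₁A₂` system is trivial
      haveI : IsEmpty (Fin a1 × Fin a2) := by
        constructor
        intro p
        rcases Nat.mul_eq_zero.mp hn with h0 | h0
        · exact absurd p.1.2 (by omega)
        · exact absurd p.2.2 (by omega)
      refine ⟨0, fun i => i.elim0, fun i => i.elim0, fun i => i.elim0, fun i => i.elim0, ?_⟩
      ext p q
      exact (this.false p.1).elim
    · obtain ⟨k, X, Y, hX, hY, hsum⟩ :=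
        h (a1 * a2) (EB.ment a1 a2) EB.ment_psd (EB.ment_trace hn)
      refine ⟨k, fun i => ((a1 * a2 : ℕ) : ℂ) •
          ((X i).submatrix finProdFinEquiv finProdFinEquiv), Y,
        fun i => EB.psd_natSmul ((hX i).submatrix _) _, hY, ?_⟩
      ext ⟨a, b⟩ ⟨a', b'⟩
      have h1 := congrFun (congrFun hsum (finProdFinEquiv a, b)) (finProdFinEquiv a', b')
      rw [EB.out_ment] at h1
      simp only [Equiv.symm_apply_apply] at h1
      have hne : ((a1 * a2 : ℕ) : ℂ) ≠ 0 := Nat.cast_ne_zero.mpr hn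
      have h2 : J (a, b) (a', b') = ((a1 * a2 : ℕ) : ℂ) *
          (∑ i, X i ⊗ₖ Y i) (finProdFinEquiv a, b) (finProdFinEquiv a', b') := by
        rw [← h1, ← mul_assoc, mul_inv_cancel₀ hne, one_mul]
      rw [h2]
      simp only [Matrix.sum_apply, Matrix.kroneckerMap_apply, Matrix.smul_apply,
        Matrix.submatrix_apply, Finset.mul_sum, smul_eq_mul]
      exact Finset.sum_congr rfl fun i _ => by ring
  · -- reverse direction
    rintro ⟨k, X, Y, hX, hY, hsum⟩ r ρ hρ _
    refine ⟨k, fun i => Matrix.of fun r r' => ∑ a, ∑ a', X i a a' * ρ (r, a) (r', a'), Y,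
      fun i => EB.contract_psd (hX i) hρ, hY, ?_⟩
    ext p q
    subst hsum
    simp only [outState, Matrix.of_apply, Matrix.sum_apply, Matrix.kroneckerMap_apply,
      Finset.sum_mul, Finset.mul_sum]
    rw [EB.sum_rotate fun a a' i => X i a a' * Y i (p.2) (q.2) * ρ (p.1, a) (q.1, a')]
    exact Finset.sum_congr rfl fun i _ => Finset.sum_congr rfl fun a _ =>
      Finset.sum_congr rfl fun a' _ => by ring
end
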